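/- Let η = (1, z, w, q₁, q₂, q₃) with ‖z‖ ≤ 1, wᵀ Q⁻¹ w ≤ 1 (Q ≻ 0), q₁ᵀq₁ ≤ x̂ᵀE₁ᵀE₁x̂, q₂ᵀq₂ ≤ zᵀΞᵀE₁ᵀE₁Ξz, q₃ᵀq₃ ≤ wᵀE₂ᵀE₂w. Suppose Γ is a matrix and P ≻ 0 such that Γᵀ P⁻¹ Γ ⪯ Θ, where Θ is the S-procedure certificate matrix diag(1 − τ₁ − τ₂ − τ₃ x̂ᵀE₁ᵀE₁x̂, τ₁I − τ₄ΞᵀE₁ᵀE₁Ξ, τ₂Q⁻¹ − τ₅E₂ᵀE₂, τ₃I, τ₄I, τ₅I) for some τ₁,…,τ₅ ≥ 0. Then (Γη)ᵀ P⁻¹ (Γη) ≤ 1. -/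

import Mathlib

open Matrix

/-- Euclidean norm of a vector in `ℝⁿ`. -/
noncomputable def enorm {n : ℕ} (v : Fin n → ℝ) : ℝ := Real.sqrt (∑ i, v i ^ 2)

/-- Block-diagonal matrix with six diagonal blocks. -/
def bd6 {a b c d e f : Type*} (A : Matrix a a ℝ) (B : Matrix b b ℝ)
    (C : Matrix c c ℝ) (D : Matrix d d ℝ) (E : Matrix e e ℝ)
    (F : Matrix f f ℝ) :
    Matrix (a ⊕ (b ⊕ (c ⊕ (d ⊕ (e ⊕ f))))) (a ⊕ (b ⊕ (c ⊕ (d ⊕ (e ⊕ f))))) ℝ :=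
  Matrix.fromBlocks A 0 0
    (Matrix.fromBlocks B 0 0
      (Matrix.fromBlocks C 0 0
        (Matrix.fromBlocks D 0 0
          (Matrix.fromBlocks E 0 0 F))))

/-!
Evaluating the S-procedure inequality `Θ - Γᵀ P⁻¹ Γ ⪰ 0` at `η` gives
`(Γη)ᵀ P⁻¹ (Γη) ≤ ηᵀ Θ η`. Because `Θ` is block diagonal,
`ηᵀ Θ η = 1 - τ₁ (1 - ‖z‖²) - τ₂ (1 - wᵀQ⁻¹w) - τ₃ (x̂ᵀE₁ᵀE₁x̂ - ‖q₁‖²)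
  - τ₄ (zᵀΞᵀE₁ᵀE₁Ξz - ‖q₂‖²) - τ₅ (wᵀE₂ᵀE₂w - ‖q₃‖²)`,
and every bracket is nonnegative by the constraint on the corresponding component of `η`.
-/

lemma dotProduct_self_le_one_of_enorm_le_one {n : ℕ} {v : Fin n → ℝ} (hv : _root_.enorm v ≤ 1) :
    v ⬝ᵥ v ≤ 1 := by
  have hsum : v ⬝ᵥ v = ∑ i, v i ^ 2 := by simp only [dotProduct, sq]
  rw [hsum, ← Real.sqrt_le_one (x := ∑ i, v i ^ 2)]
  exact hv

lemma sumElim_dotProduct_bd6_mulVec_sumElim {a b c d e f : Type*} [Fintype a] [Fintype b]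
    [Fintype c] [Fintype d] [Fintype e] [Fintype f] (A : Matrix a a ℝ) (B : Matrix b b ℝ)
    (C : Matrix c c ℝ) (D : Matrix d d ℝ) (E : Matrix e e ℝ) (F : Matrix f f ℝ)
    (u : a → ℝ) (v : b → ℝ) (x : c → ℝ) (y : d → ℝ) (s : e → ℝ) (t : f → ℝ) :
    Sum.elim u (Sum.elim v (Sum.elim x (Sum.elim y (Sum.elim s t)))) ⬝ᵥ
        (bd6 A B C D E F *ᵥ Sum.elim u (Sum.elim v (Sum.elim x (Sum.elim y (Sum.elim s t))))) =
      u ⬝ᵥ (A *ᵥ u) + v ⬝ᵥ (B *ᵥ v) + x ⬝ᵥ (C *ᵥ x) + y ⬝ᵥ (D *ᵥ y) + s ⬝ᵥ (E *ᵥ s) +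
        t ⬝ᵥ (F *ᵥ t) := by
  simp only [bd6, fromBlocks_mulVec, zero_mulVec, add_zero, zero_add, Sum.elim_comp_inl,
    Sum.elim_comp_inr, sumElim_dotProduct_sumElim, add_assoc]

lemma dotProduct_mulVec_le_of_posSemidef_sub {m k : Type*} [Fintype m] [Fintype k]
    {Θ : Matrix m m ℝ} {Γ : Matrix k m ℝ} {M : Matrix k k ℝ}
    (h : (Θ - Γᵀ * M * Γ).PosSemidef) (η : m → ℝ) :
    (Γ *ᵥ η) ⬝ᵥ (M *ᵥ (Γ *ᵥ η)) ≤ η ⬝ᵥ (Θ *ᵥ η) := by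
  have hη := h.dotProduct_mulVec_nonneg η
  rw [star_trivial, sub_mulVec, dotProduct_sub, ← mulVec_mulVec, ← mulVec_mulVec,
    dotProduct_mulVec η Γᵀ, vecMul_transpose] at hη
  linarith

theorem stmt16_general {n w q₁ q₂ d₃ d₄ d₅ N : ℕ}
    (z : Fin n → ℝ) (wv : Fin w → ℝ)
    (qv₁ : Fin d₃ → ℝ) (qv₂ : Fin d₄ → ℝ) (qv₃ : Fin d₅ → ℝ)
    (xhat : Fin n → ℝ) (Ξ : Matrix (Fin n) (Fin n) ℝ)
    (E₁ : Matrix (Fin q₁) (Fin n) ℝ) (E₂ : Matrix (Fin q₂) (Fin w) ℝ)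
    (Q : Matrix (Fin w) (Fin w) ℝ)
    (hz : _root_.enorm z ≤ 1)
    (hw : wv ⬝ᵥ (Q⁻¹ *ᵥ wv) ≤ 1)
    (hq₁ : qv₁ ⬝ᵥ qv₁ ≤ xhat ⬝ᵥ ((E₁ᵀ * E₁) *ᵥ xhat))
    (hq₂ : qv₂ ⬝ᵥ qv₂ ≤ z ⬝ᵥ ((Ξᵀ * E₁ᵀ * E₁ * Ξ) *ᵥ z))
    (hq₃ : qv₃ ⬝ᵥ qv₃ ≤ wv ⬝ᵥ ((E₂ᵀ * E₂) *ᵥ wv))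
    (τ₁ τ₂ τ₃ τ₄ τ₅ : ℝ)
    (hτ₁ : 0 ≤ τ₁) (hτ₂ : 0 ≤ τ₂) (hτ₃ : 0 ≤ τ₃) (hτ₄ : 0 ≤ τ₄) (hτ₅ : 0 ≤ τ₅)
    (Γ : Matrix (Fin N) (Fin 1 ⊕ (Fin n ⊕ (Fin w ⊕ (Fin d₃ ⊕ (Fin d₄ ⊕ Fin d₅))))) ℝ)
    (P : Matrix (Fin N) (Fin N) ℝ)
    (hSproc : (bd6 ((1 - τ₁ - τ₂ - τ₃ * (xhat ⬝ᵥ ((E₁ᵀ * E₁) *ᵥ xhat))) • (1 : Matrix (Fin 1) (Fin 1) ℝ))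
        (τ₁ • (1 : Matrix (Fin n) (Fin n) ℝ) - τ₄ • (Ξᵀ * E₁ᵀ * E₁ * Ξ))
        (τ₂ • Q⁻¹ - τ₅ • (E₂ᵀ * E₂))
        (τ₃ • (1 : Matrix (Fin d₃) (Fin d₃) ℝ))
        (τ₄ • (1 : Matrix (Fin d₄) (Fin d₄) ℝ))
        (τ₅ • (1 : Matrix (Fin d₅) (Fin d₅) ℝ))
        - Γᵀ * P⁻¹ * Γ).PosSemidef) :
    (Γ *ᵥ (Sum.elim (fun _ => (1 : ℝ))
        (Sum.elim z (Sum.elim wv (Sum.elim qv₁ (Sum.elim qv₂ qv₃)))))) ⬝ᵥ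
      (P⁻¹ *ᵥ (Γ *ᵥ (Sum.elim (fun _ => (1 : ℝ))
        (Sum.elim z (Sum.elim wv (Sum.elim qv₁ (Sum.elim qv₂ qv₃))))))) ≤ 1 := by
  refine (dotProduct_mulVec_le_of_posSemidef_sub hSproc _).trans ?_
  rw [sumElim_dotProduct_bd6_mulVec_sumElim]
  simp only [sub_mulVec, smul_mulVec, one_mulVec, dotProduct_sub, dotProduct_smul, smul_eq_mul,
    ← Pi.one_def, one_dotProduct_one, Fintype.card_fin, Nat.cast_one, mul_one]
  have hzz := dotProduct_self_le_one_of_enorm_le_one hz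
  linarith [mul_le_mul_of_nonneg_left hzz hτ₁, mul_le_mul_of_nonneg_left hw hτ₂,
    mul_le_mul_of_nonneg_left hq₁ hτ₃, mul_le_mul_of_nonneg_left hq₂ hτ₄,
    mul_le_mul_of_nonneg_left hq₃ hτ₅]

theorem stmt16 {n w q₁ q₂ d₃ d₄ d₅ N : ℕ}
    (z : Fin n → ℝ) (wv : Fin w → ℝ)
    (qv₁ : Fin d₃ → ℝ) (qv₂ : Fin d₄ → ℝ) (qv₃ : Fin d₅ → ℝ)
    (xhat : Fin n → ℝ) (Ξ : Matrix (Fin n) (Fin n) ℝ)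
    (E₁ : Matrix (Fin q₁) (Fin n) ℝ) (E₂ : Matrix (Fin q₂) (Fin w) ℝ)
    (Q : Matrix (Fin w) (Fin w) ℝ) (hQ : Q.PosDef)
    (hz : _root_.enorm z ≤ 1)
    (hw : wv ⬝ᵥ (Q⁻¹ *ᵥ wv) ≤ 1)
    (hq₁ : qv₁ ⬝ᵥ qv₁ ≤ xhat ⬝ᵥ ((E₁ᵀ * E₁) *ᵥ xhat))
    (hq₂ : qv₂ ⬝ᵥ qv₂ ≤ z ⬝ᵥ ((Ξᵀ * E₁ᵀ * E₁ * Ξ) *ᵥ z))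
    (hq₃ : qv₃ ⬝ᵥ qv₃ ≤ wv ⬝ᵥ ((E₂ᵀ * E₂) *ᵥ wv))
    (τ₁ τ₂ τ₃ τ₄ τ₅ : ℝ)
    (hτ₁ : 0 ≤ τ₁) (hτ₂ : 0 ≤ τ₂) (hτ₃ : 0 ≤ τ₃) (hτ₄ : 0 ≤ τ₄) (hτ₅ : 0 ≤ τ₅)
    (Γ : Matrix (Fin N) (Fin 1 ⊕ (Fin n ⊕ (Fin w ⊕ (Fin d₃ ⊕ (Fin d₄ ⊕ Fin d₅))))) ℝ)
    (P : Matrix (Fin N) (Fin N) ℝ) (hP : P.PosDef)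
    (hSproc : (bd6 ((1 - τ₁ - τ₂ - τ₃ * (xhat ⬝ᵥ ((E₁ᵀ * E₁) *ᵥ xhat))) • (1 : Matrix (Fin 1) (Fin 1) ℝ))
        (τ₁ • (1 : Matrix (Fin n) (Fin n) ℝ) - τ₄ • (Ξᵀ * E₁ᵀ * E₁ * Ξ))
        (τ₂ • Q⁻¹ - τ₅ • (E₂ᵀ * E₂))
        (τ₃ • (1 : Matrix (Fin d₃) (Fin d₃) ℝ))
        (τ₄ • (1 : Matrix (Fin d₄) (Fin d₄) ℝ))
        (τ₅ • (1 : Matrix (Fin d₅) (Fin d₅) ℝ))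
        - Γᵀ * P⁻¹ * Γ).PosSemidef) :
    (Γ *ᵥ (Sum.elim (fun _ => (1 : ℝ))
        (Sum.elim z (Sum.elim wv (Sum.elim qv₁ (Sum.elim qv₂ qv₃)))))) ⬝ᵥ
      (P⁻¹ *ᵥ (Γ *ᵥ (Sum.elim (fun _ => (1 : ℝ))
        (Sum.elim z (Sum.elim wv (Sum.elim qv₁ (Sum.elim qv₂ qv₃))))))) ≤ 1 :=
  stmt16_general z wv qv₁ qv₂ qv₃ xhat Ξ E₁ E₂ Q hz hw hq₁ hq₂ hq₃ τ₁ τ₂ τ₃ τ₄ τ₅ hτ₁ hτ₂ hτ₃ hτ₄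
    hτ₅ Γ P hSproc
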